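/- arXiv:1402.2738 — 5 statements merged into one kernel-verified Lean document; each statement's English description precedes it below -/
import Mathlib

section
/- For n ≥ 3 and θ ∈ [π/3, π/2), let x_θ = cos θ · e₁ + sin θ · e₂ ∈ ℝⁿ and let Λ_θ be the lattice spanned over ℤ by e₁, x_θ, e₃, ..., eₙ. Then Λ_θ is well-rounded with all successive minima equal to 1, but Λ_θ is unstable: the rank-2 sublattice Ω_θ spanned by e₁ and x_θ satisfies det(Ω_θ)^{1/2} < det(Λ_θ)^{1/n}. -/
/-- Euclidean norm on `Fin n → ℝ`. -/
noncomputable def enormEucl {n : ℕ} (x : Fin n → ℝ) : ℝ :=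
  Real.sqrt (∑ i, x i ^ 2)

/-- The lattice generated by the columns of `B`. -/
def latticeOf {n : ℕ} (B : Matrix (Fin n) (Fin n) ℝ) : Set (Fin n → ℝ) :=
  Set.range (fun v : Fin n → ℤ => B.mulVec (fun i => (v i : ℝ)))

/-- The `i`-th successive minimum of the lattice generated by `B`. -/
noncomputable def succMin {n : ℕ} (B : Matrix (Fin n) (Fin n) ℝ) (i : ℕ) : ℝ :=
  sInf {r : ℝ | 0 < r ∧ i ≤ Set.finrank ℝ {x | x ∈ latticeOf B ∧ enormEucl x ≤ r}}

/-- Covolume of the sublattice spanned by the family `w`, via the Gram determinant. -/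
noncomputable def subdet {n k : ℕ} (w : Fin k → (Fin n → ℝ)) : ℝ :=
  Real.sqrt (Matrix.det (Matrix.of fun i j => ∑ t, w i t * w j t))

/-!
A vector of `Λ_θ` with integer coordinates `v` has squared length
`(v₁ + v₂ cos θ)² + (v₂ sin θ)² + ∑_{i ≥ 3} vᵢ²`, and the planar part equals
`v₁² + 2 v₁ v₂ cos θ + v₂² ≥ |v₁|² - |v₁| |v₂| + |v₂|²`, a positive definite integral form.
Hence nonzero lattice vectors have length at least `1`; as the basis vectors are unit vectors
spanning `ℝⁿ`, every successive minimum is `1`. Both `Λ_θ` and `Ω_θ` have covolume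
`sin θ ∈ (0, 1)`, so `(sin θ)^{1/2} < (sin θ)^{1/n}` gives instability.
-/

open Matrix

def shortVectors {n : ℕ} (B : Matrix (Fin n) (Fin n) ℝ) (r : ℝ) : Set (Fin n → ℝ) :=
  {x | x ∈ latticeOf B ∧ enormEucl x ≤ r}

section SuccessiveMinima

variable {n : ℕ} {B : Matrix (Fin n) (Fin n) ℝ} {r : ℝ}

lemma col_mem_latticeOf (B : Matrix (Fin n) (Fin n) ℝ) (j : Fin n) : B.col j ∈ latticeOf B :=
  ⟨Pi.single j 1, by
    have : (fun i => ((Pi.single j 1 : Fin n → ℤ) i : ℝ)) = Pi.single j 1 := by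
      ext i; by_cases h : i = j <;> simp [h]
    simp only [this, mulVec_single_one]⟩

lemma finrank_shortVectors_eq_zero (hmin : ∀ x ∈ latticeOf B, x ≠ 0 → 1 ≤ enormEucl x)
    (hr : r < 1) : Set.finrank ℝ (shortVectors B r) = 0 := by
  have hspan : Submodule.span ℝ (shortVectors B r) = ⊥ :=
    Submodule.span_eq_bot.2 fun x ⟨hx, hxr⟩ => by
      by_contra hx0
      linarith [hmin x hx hx0]
  rw [Set.finrank, hspan, finrank_bot]

lemma finrank_shortVectors_eq (hdet : B.det ≠ 0) (hcol : ∀ j, enormEucl (B.col j) ≤ 1)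
    (hr : 1 ≤ r) : Set.finrank ℝ (shortVectors B r) = n := by
  have hsurj : Function.Surjective B.mulVecLin :=
    mulVec_surjective_iff_isUnit.2 ((isUnit_iff_isUnit_det B).2 hdet.isUnit)
  have hspan : Submodule.span ℝ (shortVectors B r) = ⊤ := by
    refine eq_top_iff.2 ?_
    calc ⊤ = Submodule.span ℝ (Set.range B.col) := by
          rw [← range_mulVecLin, LinearMap.range_eq_top.2 hsurj]
      _ ≤ _ := Submodule.span_mono <| Set.range_subset_iff.2 fun j =>
          show B.col j ∈ shortVectors B r from ⟨col_mem_latticeOf B j, (hcol j).trans hr⟩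
  rw [Set.finrank, hspan, finrank_top, Module.finrank_fin_fun]

theorem succMin_eq_one (hdet : B.det ≠ 0) (hmin : ∀ x ∈ latticeOf B, x ≠ 0 → 1 ≤ enormEucl x)
    (hcol : ∀ j, enormEucl (B.col j) ≤ 1) {i : ℕ} (hi : 1 ≤ i) (hin : i ≤ n) :
    succMin B i = 1 := by
  have hset : {r : ℝ | 0 < r ∧ i ≤ Set.finrank ℝ (shortVectors B r)} = Set.Ici 1 := by
    ext r
    refine ⟨fun ⟨_, hrank⟩ => ?_, fun hr => ⟨by linarith [Set.mem_Ici.1 hr], ?_⟩⟩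
    · by_contra! hr
      rw [Set.mem_Ici, not_le] at hr
      rw [finrank_shortVectors_eq_zero hmin hr] at hrank
      omega
    · rwa [finrank_shortVectors_eq hdet hcol hr]
  change sInf {r : ℝ | 0 < r ∧ i ≤ Set.finrank ℝ (shortVectors B r)} = 1
  rw [hset, csInf_Ici]

end SuccessiveMinima

lemma one_le_sq_sub_mul_add_sq {a b : ℤ} (h : a ≠ 0 ∨ b ≠ 0) : 1 ≤ a ^ 2 - a * b + b ^ 2 := by
  have : 0 < a ^ 2 + b ^ 2 := by
    rcases h with h | h <;> positivity
  nlinarith [sq_nonneg (a - b)]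

lemma one_le_sq_add_sq_of_abs_le_half {c s : ℝ} (hc : |c| ≤ 1 / 2) (hcs : c ^ 2 + s ^ 2 = 1)
    {a b : ℤ} (h : a ≠ 0 ∨ b ≠ 0) : 1 ≤ (a + b * c) ^ 2 + (b * s) ^ 2 := by
  have hform : (1 : ℝ) ≤ |(a : ℝ)| ^ 2 - |(a : ℝ)| * |(b : ℝ)| + |(b : ℝ)| ^ 2 := by
    exact_mod_cast one_le_sq_sub_mul_add_sq (a := |a|) (b := |b|) (by simpa using h)
  have hcross : |2 * (a : ℝ) * b * c| ≤ |(a : ℝ)| * |(b : ℝ)| := by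
    rw [abs_mul, abs_mul, abs_mul, abs_two]
    nlinarith [mul_nonneg (abs_nonneg (a : ℝ)) (abs_nonneg (b : ℝ))]
  calc (1 : ℝ) ≤ |(a : ℝ)| ^ 2 - |(a : ℝ)| * |(b : ℝ)| + |(b : ℝ)| ^ 2 := hform
    _ ≤ a ^ 2 + 2 * a * b * c + b ^ 2 := by
      rw [sq_abs, sq_abs]; linarith [neg_abs_le (2 * (a : ℝ) * b * c)]
    _ = (a + b * c) ^ 2 + (b * s) ^ 2 := by linear_combination (-(b : ℝ) ^ 2) * hcs

section Vectors

variable {n : ℕ} {p q : Fin n} {c s : ℝ}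

lemma enormEucl_single (j : Fin n) (a : ℝ) : enormEucl (Pi.single j a) = |a| := by
  simp [enormEucl, Pi.single_apply, Real.sqrt_sq_eq_abs]

lemma enormEucl_single_add_single (hpq : p ≠ q) :
    enormEucl (Pi.single p c + Pi.single q s) = √(c ^ 2 + s ^ 2) := by
  rw [enormEucl, Fintype.sum_eq_add p q hpq fun i ⟨hip, hiq⟩ => by simp [hip, hiq]]
  simp [hpq, hpq.symm]

lemma subdet_pair (u w : Fin n → ℝ) :
    subdet ![u, w] = √((u ⬝ᵥ u) * (w ⬝ᵥ w) - (u ⬝ᵥ w) ^ 2) := by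
  rw [subdet, det_fin_two]
  simp only [of_apply, cons_val_zero, cons_val_one, cons_val_fin_one]
  change √((u ⬝ᵥ u) * (w ⬝ᵥ w) - (u ⬝ᵥ w) * (w ⬝ᵥ u)) = _
  rw [dotProduct_comm w u, sq]

lemma subdet_single_one_single_add_single (hpq : p ≠ q) :
    subdet ![Pi.single p 1, Pi.single p c + Pi.single q s] = |s| := by
  rw [subdet_pair, ← Real.sqrt_sq_eq_abs]
  simp [hpq, hpq.symm]
  ring_nf

end Vectors

section TiltedBasis

variable {n : ℕ} {p q : Fin n} {c s : ℝ}

def tiltedBasis (p q : Fin n) (c s : ℝ) : Matrix (Fin n) (Fin n) ℝ :=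
  (1 : Matrix (Fin n) (Fin n) ℝ).updateCol q (Pi.single p c + Pi.single q s)

lemma tiltedBasis_det (hpq : p ≠ q) : (tiltedBasis p q c s).det = s := by
  unfold tiltedBasis
  set x : Fin n → ℝ := Pi.single p c + Pi.single q s
  have hx : (fun k => ∑ i, x i • (1 : Matrix (Fin n) (Fin n) ℝ) k i) = x := by
    ext k; simp [one_apply]
  rw [← hx, det_updateCol_sum, det_one]
  simp [x, hpq.symm]

lemma tiltedBasis_col (j : Fin n) : (tiltedBasis p q c s).col j =
    if j = q then Pi.single p c + Pi.single q s else Pi.single j 1 := by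
  ext i
  by_cases hj : j = q
  · simp [tiltedBasis, hj]
  · simp [tiltedBasis, hj, one_apply, Pi.single_apply]

lemma enormEucl_tiltedBasis_col (hpq : p ≠ q) (hcs : c ^ 2 + s ^ 2 = 1) (j : Fin n) :
    enormEucl ((tiltedBasis p q c s).col j) = 1 := by
  rw [tiltedBasis_col]
  split_ifs
  · rw [enormEucl_single_add_single hpq, hcs, Real.sqrt_one]
  · rw [enormEucl_single, abs_one]

lemma tiltedBasis_mulVec (v : Fin n → ℝ) :
    tiltedBasis p q c s *ᵥ v = Function.update v q 0 + v q • (Pi.single p c + Pi.single q s) := by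
  ext i
  simp only [tiltedBasis, mulVec, dotProduct, updateCol_apply, one_apply]
  by_cases hi : i = q
  · subst hi
    rw [Fintype.sum_eq_single i fun j hj => by simp [hj, Ne.symm hj]]
    simp; ring
  · rw [Fintype.sum_eq_add q i (Ne.symm hi) fun j ⟨hjq, hji⟩ => by simp [hjq, Ne.symm hji]]
    simp [hi]; ring

lemma tiltedBasis_mulVec_apply_left (hpq : p ≠ q) (v : Fin n → ℝ) :
    (tiltedBasis p q c s *ᵥ v) p = v p + v q * c := by
  simp [tiltedBasis_mulVec, hpq]

lemma tiltedBasis_mulVec_apply_right (hpq : p ≠ q) (v : Fin n → ℝ) :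
    (tiltedBasis p q c s *ᵥ v) q = v q * s := by
  simp [tiltedBasis_mulVec, hpq.symm]

lemma tiltedBasis_mulVec_apply_of_ne {i : Fin n} (hip : i ≠ p) (hiq : i ≠ q) (v : Fin n → ℝ) :
    (tiltedBasis p q c s *ᵥ v) i = v i := by
  simp [tiltedBasis_mulVec, hip, hiq]

lemma one_le_enormEucl_of_mem_latticeOf_tiltedBasis (hpq : p ≠ q) (hc : |c| ≤ 1 / 2)
    (hcs : c ^ 2 + s ^ 2 = 1) :
    ∀ x ∈ latticeOf (tiltedBasis p q c s), x ≠ 0 → 1 ≤ enormEucl x := by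
  rintro _ ⟨v, rfl⟩ hx
  beta_reduce at hx ⊢
  rw [enormEucl, Real.one_le_sqrt]
  by_cases hrest : ∃ i, i ≠ p ∧ i ≠ q ∧ v i ≠ 0
  · obtain ⟨i, hip, hiq, hvi⟩ := hrest
    calc (1 : ℝ) ≤ (v i : ℝ) ^ 2 := by
          exact_mod_cast (one_le_sq_iff_one_le_abs _).2 (Int.one_le_abs hvi)
      _ = _ := by rw [tiltedBasis_mulVec_apply_of_ne hip hiq]
      _ ≤ _ := Finset.single_le_sum (fun j _ => sq_nonneg _) (Finset.mem_univ i)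
  · push Not at hrest
    have hplane : v p ≠ 0 ∨ v q ≠ 0 := by
      by_contra! h0
      have hv : v = 0 := funext fun i =>
        if hip : i = p then hip ▸ h0.1 else if hiq : i = q then hiq ▸ h0.2 else hrest i hip hiq
      refine hx ?_
      simp only [hv, Pi.zero_apply, Int.cast_zero]
      exact mulVec_zero _
    rw [Fintype.sum_eq_add p q hpq fun i ⟨hip, hiq⟩ => by
      rw [tiltedBasis_mulVec_apply_of_ne hip hiq, hrest i hip hiq]; simp,
      tiltedBasis_mulVec_apply_left hpq, tiltedBasis_mulVec_apply_right hpq]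
    exact one_le_sq_add_sq_of_abs_le_half hc hcs hplane

end TiltedBasis

open Real in
/-- For `n ≥ 3` and `θ ∈ [π/3, π/2)`, the lattice spanned by `e₁, x_θ, e₃, …, eₙ`
is well-rounded with all successive minima equal to `1`, but unstable: the rank-2
sublattice spanned by `e₁, x_θ` satisfies `det(Ω_θ)^{1/2} < det(Λ_θ)^{1/n}`. -/
theorem wr_unstable_family (n : ℕ) (hn : 3 ≤ n) (θ : ℝ)
    (hθ1 : Real.pi / 3 ≤ θ) (hθ2 : θ < Real.pi / 2)
    (xθ : Fin n → ℝ)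
    (hx : xθ = fun i => if i = ⟨0, by omega⟩ then Real.cos θ
      else if i = ⟨1, by omega⟩ then Real.sin θ else 0)
    (e : Fin n → (Fin n → ℝ)) (he : e = fun j => Pi.single j 1)
    (B : Matrix (Fin n) (Fin n) ℝ)
    (hB : B = Matrix.of fun i j =>
      if j = ⟨0, by omega⟩ then e ⟨0, by omega⟩ i
      else if j = ⟨1, by omega⟩ then xθ i else e j i) :
    (∀ i : ℕ, 1 ≤ i → i ≤ n → succMin B i = 1) ∧
    subdet ![e ⟨0, by omega⟩, xθ] ^ ((1 : ℝ) / 2) < |B.det| ^ ((1 : ℝ) / n) := by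
  set p : Fin n := ⟨0, by omega⟩
  set q : Fin n := ⟨1, by omega⟩
  have hpq : p ≠ q := by simp [p, q, Fin.ext_iff]
  have hxθ : xθ = Pi.single p (cos θ) + Pi.single q (sin θ) := by
    subst hx; ext i; by_cases hip : i = p <;> by_cases hiq : i = q <;> simp_all
  have hBθ : B = tiltedBasis p q (cos θ) (sin θ) := by
    rw [hB, he, hxθ]; ext i j
    by_cases hjq : j = q
    · simp [tiltedBasis, hjq, hpq.symm]
    · simp only [tiltedBasis, of_apply, Pi.single_apply, hjq, if_false, updateCol_ne hjq, one_apply]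
      split_ifs <;> simp_all
  have hcos0 : 0 < cos θ := cos_pos_of_mem_Ioo ⟨by linarith [pi_pos], hθ2⟩
  have hcos : |cos θ| ≤ 1 / 2 := by
    rw [abs_of_pos hcos0, ← cos_pi_div_three]
    exact cos_le_cos_of_nonneg_of_le_pi (by positivity) (by linarith [pi_pos]) hθ1
  have hcs : cos θ ^ 2 + sin θ ^ 2 = 1 := cos_sq_add_sin_sq θ
  have hsin0 : 0 < sin θ := sin_pos_of_pos_of_lt_pi (by linarith [pi_pos]) (by linarith [pi_pos])
  have hsin1 : sin θ < 1 := by nlinarith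
  subst hBθ hxθ he
  refine ⟨fun i hi hin => succMin_eq_one (by rw [tiltedBasis_det hpq]; exact hsin0.ne')
    (one_le_enormEucl_of_mem_latticeOf_tiltedBasis hpq hcos hcs)
    (fun j => (enormEucl_tiltedBasis_col hpq hcs j).le) hi hin, ?_⟩
  rw [subdet_single_one_single_add_single hpq, tiltedBasis_det hpq, abs_of_pos hsin0]
  refine rpow_lt_rpow_of_exponent_gt hsin0 hsin1 (one_div_lt_one_div_of_lt two_pos ?_)
  exact_mod_cast hn
end

section
/- Let D be an integer with |D| > 1 squarefree and let 0 < ε < 1/2 be real. Then the set of positive integers x for which there exists a divisor b of x² − D with x < b ≤ x + x^{1/2−ε} is finite. -/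
/-- The set of positive integers `x` having a divisor `b` of `x² − D` with
`x < b ≤ x + x^{1/2−ε}` is finite. -/
theorem divisor_lemma_finite (D : ℤ) (hD : 1 < |D|) (hsf : Squarefree D)
    (ε : ℝ) (hε0 : 0 < ε) (hε : ε < 1 / 2) :
    {x : ℕ | 0 < x ∧ ∃ b : ℕ, 0 < b ∧ (b : ℤ) ∣ (x : ℤ) ^ 2 - D ∧
      (x : ℝ) < (b : ℝ) ∧ (b : ℝ) ≤ (x : ℝ) + (x : ℝ) ^ ((1 : ℝ) / 2 - ε)}.Finite := by
  have h2e : (0:ℝ) < 2 * ε := by linarith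
  obtain ⟨N, hN1, hN⟩ : ∃ N : ℕ, 1 ≤ N ∧ ∀ x : ℕ, N ≤ x →
      (x:ℝ) ^ ((1:ℝ) - 2*ε) + (D.natAbs : ℝ) < x := by
    refine ⟨max (⌈(2:ℝ) ^ ((2*ε)⁻¹)⌉₊ + 1) (2 * D.natAbs + 2), le_trans (by omega) (le_max_left _ _), fun x hx => ?_⟩
    have hx1 : (1:ℕ) ≤ x := le_trans (le_trans (by omega) (le_max_left _ _)) hx
    have hx0 : (0:ℝ) < x := by exact_mod_cast hx1
    have hb : (2:ℝ) ^ ((2*ε)⁻¹) ≤ x := by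
      have h1 : ⌈(2:ℝ) ^ ((2*ε)⁻¹)⌉₊ ≤ x := by
        have := le_trans (le_max_left (⌈(2:ℝ) ^ ((2*ε)⁻¹)⌉₊ + 1) (2 * D.natAbs + 2)) hx
        omega
      exact le_trans (Nat.le_ceil _) (by exact_mod_cast h1)
    have key : (2:ℝ) ≤ (x:ℝ) ^ (2*ε) := by
      calc (2:ℝ) = ((2:ℝ) ^ ((2*ε)⁻¹)) ^ (2*ε) := by
            rw [← Real.rpow_mul (by norm_num), inv_mul_cancel₀ (ne_of_gt h2e), Real.rpow_one]
        _ ≤ (x:ℝ) ^ (2*ε) := Real.rpow_le_rpow (by positivity) hb (le_of_lt h2e)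
    have hhalf : 2 * (x:ℝ) ^ ((1:ℝ) - 2*ε) ≤ x := by
      calc 2 * (x:ℝ) ^ ((1:ℝ) - 2*ε) ≤ (x:ℝ) ^ (2*ε) * (x:ℝ) ^ ((1:ℝ) - 2*ε) :=
            mul_le_mul_of_nonneg_right key (Real.rpow_nonneg hx0.le _)
        _ = (x:ℝ) ^ (2*ε + ((1:ℝ) - 2*ε)) := (Real.rpow_add hx0 _ _).symm
        _ = x := by rw [show 2*ε + ((1:ℝ) - 2*ε) = 1 by ring, Real.rpow_one]
    have hDx : 2 * (D.natAbs : ℝ) + 2 ≤ x := by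
      have := le_trans (le_max_right (⌈(2:ℝ) ^ ((2*ε)⁻¹)⌉₊ + 1) (2 * D.natAbs + 2)) hx
      exact_mod_cast this
    linarith
  apply (Set.finite_Iio N).subset
  rintro x ⟨hx0, b, hb0, hdvd, hlt, hle⟩
  by_contra hxN
  simp only [Set.mem_Iio, not_lt] at hxN
  have hxb : x < b := by exact_mod_cast hlt
  set c := b - x with hc
  have hbxc : b = x + c := by omega
  have hc1 : 1 ≤ c := by omega
  have hxR1 : (1:ℝ) ≤ x := by exact_mod_cast le_trans hN1 hxN
  have hxRpos : (0:ℝ) < x := by linarith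
  have hcle : (c:ℝ) ≤ (x:ℝ) ^ ((1:ℝ)/2 - ε) := by
    have hb' : (b:ℝ) = (x:ℝ) + c := by rw [hbxc]; push_cast; ring
    linarith [hle]
  have hcsq : ((c:ℝ))^2 ≤ (x:ℝ) ^ ((1:ℝ) - 2*ε) := by
    have h := mul_le_mul hcle hcle (by positivity) (by positivity)
    rw [← Real.rpow_add hxRpos] at h
    calc ((c:ℝ))^2 = (c:ℝ) * c := sq (c:ℝ)
      _ ≤ (x:ℝ) ^ ((1:ℝ)/2 - ε + ((1:ℝ)/2 - ε)) := h
      _ = (x:ℝ) ^ ((1:ℝ) - 2*ε) := by norm_num; ring_nf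
  have hdvd1 : (b:ℤ) ∣ (x:ℤ)^2 - (c:ℤ)^2 := ⟨(x:ℤ) - c, by rw [hbxc]; push_cast; ring⟩
  have hdvd2 : (b:ℤ) ∣ (c:ℤ)^2 - D := by
    have h := dvd_sub hdvd hdvd1
    have : (x:ℤ)^2 - D - ((x:ℤ)^2 - (c:ℤ)^2) = (c:ℤ)^2 - D := by ring
    rwa [this] at h
  have hne : (c:ℤ)^2 - D ≠ 0 := by
    intro h
    have hD' : D = (c:ℤ) * c := by nlinarith [sq (c:ℤ)]
    have hu := hsf (c:ℤ) (hD' ▸ dvd_refl _)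
    rw [Int.isUnit_iff] at hu
    have hc1' : (1:ℤ) ≤ (c:ℤ) := by exact_mod_cast hc1
    have : (c:ℤ) = 1 := by omega
    rw [this] at hD'
    simp at hD'
    rw [hD'] at hD
    norm_num at hD
  have hble : (b:ℤ) ≤ |(c:ℤ)^2 - D| := Int.le_of_dvd (abs_pos.mpr hne) ((dvd_abs _ _).mpr hdvd2)
  have habs : |(c:ℤ)^2 - D| ≤ (c:ℤ)^2 + D.natAbs := by
    have h2 : |(c:ℤ)^2| = (c:ℤ)^2 := abs_of_nonneg (by positivity)
    calc |(c:ℤ)^2 - D| ≤ |(c:ℤ)^2| + |D| := abs_sub _ _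
      _ = (c:ℤ)^2 + D.natAbs := by rw [h2, Int.abs_eq_natAbs]
  have hfinal : (b:ℝ) ≤ ((c:ℝ))^2 + (D.natAbs : ℝ) := by
    have : (b:ℤ) ≤ (c:ℤ)^2 + D.natAbs := le_trans hble habs
    exact_mod_cast this
  have hNx := hN x hxN
  linarith
end

section
/- Let D be an integer with |D| > 1 squarefree, and let x be a positive integer with x > max{|D|, 2^{1/ε}} for some 0 < ε < 1/2. If b is a positive integer dividing x² − D with x < b ≤ x + x^{1/2−ε}, then x < 4|D|. -/
/-- If `x > max{|D|, 2^{1/ε}}` and `b ∣ x² − D` with `x < b ≤ x + x^{1/2−ε}`,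
then `x < 4|D|`. -/
theorem divisor_lemma_bound (D : ℤ) (hD : 1 < |D|) (hsf : Squarefree D)
    (ε : ℝ) (hε0 : 0 < ε) (hε : ε < 1 / 2)
    (x b : ℕ) (hx0 : 0 < x) (hb0 : 0 < b)
    (hx1 : (|D| : ℝ) < (x : ℝ)) (hx2 : (2 : ℝ) ^ (1 / ε) < (x : ℝ))
    (hdvd : (b : ℤ) ∣ (x : ℤ) ^ 2 - D)
    (hlt : (x : ℝ) < (b : ℝ)) (hle : (b : ℝ) ≤ (x : ℝ) + (x : ℝ) ^ ((1 : ℝ) / 2 - ε)) :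
    (x : ℤ) < 4 * |D| := by
  have hxb : x < b := by exact_mod_cast hlt
  set t : ℤ := (b : ℤ) - (x : ℤ) with ht
  have ht1 : 1 ≤ t := by simp only [ht]; omega
  have hdvd2 : (b : ℤ) ∣ t ^ 2 - D := by
    have heq : t ^ 2 - D = (x : ℤ) ^ 2 - D + ((b : ℤ) - 2 * x) * b := by
      simp only [ht]; ring
    rw [heq]
    exact dvd_add hdvd ⟨(b : ℤ) - 2 * x, mul_comm _ _⟩
  have hne : t ^ 2 - D ≠ 0 := by
    intro h
    have hDt : D = t * t := by nlinarith [sub_eq_zero.mp h]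
    have hu : IsUnit t := hsf t (hDt ▸ dvd_refl _)
    rcases Int.isUnit_iff.mp hu with h1 | h1 <;>
      · rw [h1] at hDt; norm_num [hDt] at hD
  have hb_le : (b : ℤ) ≤ |t ^ 2 - D| :=
    Int.le_of_dvd (abs_pos.mpr hne) ((dvd_abs _ _).mpr hdvd2)
  have habs : |t ^ 2 - D| ≤ t ^ 2 + |D| := by
    rcases abs_cases (t ^ 2 - D) with ⟨he, _⟩ | ⟨he, _⟩ <;>
      rcases abs_cases D with ⟨hd, _⟩ | ⟨hd, _⟩ <;> nlinarith [sq_nonneg t]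
  have h1 : (b : ℤ) ≤ t ^ 2 + |D| := le_trans hb_le habs
  -- move to the reals
  have hx0R : (0 : ℝ) < (x : ℝ) := by exact_mod_cast hx0
  have hT1 : (1 : ℝ) ≤ (t : ℝ) := by exact_mod_cast ht1
  have hTle : (t : ℝ) ≤ (x : ℝ) ^ ((1 : ℝ) / 2 - ε) := by
    have : ((t : ℤ) : ℝ) = (b : ℝ) - (x : ℝ) := by simp [ht]
    rw [this]; linarith
  have hsq : ((t : ℝ)) ^ 2 ≤ ((x : ℝ) ^ ((1 : ℝ) / 2 - ε)) ^ 2 := by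
    nlinarith
  have hpow : ((x : ℝ) ^ ((1 : ℝ) / 2 - ε)) ^ 2 = (x : ℝ) ^ ((1 : ℝ) - 2 * ε) := by
    rw [← Real.rpow_natCast ((x : ℝ) ^ ((1 : ℝ) / 2 - ε)) 2, ← Real.rpow_mul hx0R.le]
    norm_num
    ring_nf
  have hxε : (2 : ℝ) < (x : ℝ) ^ ε := by
    have h := Real.rpow_lt_rpow (by positivity) hx2 hε0
    rwa [← Real.rpow_mul (by norm_num : (0:ℝ) ≤ 2), one_div_mul_cancel hε0.ne',
      Real.rpow_one] at h
  have h4 : (4 : ℝ) < (x : ℝ) ^ (2 * ε) := by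
    have he : (x : ℝ) ^ (2 * ε) = ((x : ℝ) ^ ε) ^ 2 := by
      rw [← Real.rpow_natCast ((x : ℝ) ^ ε) 2, ← Real.rpow_mul hx0R.le]
      norm_num; ring_nf
    nlinarith
  have hsplit : (x : ℝ) ^ ((1 : ℝ) - 2 * ε) * (x : ℝ) ^ (2 * ε) = (x : ℝ) := by
    have he1 : (1 : ℝ) - 2 * ε + 2 * ε = 1 := by ring
    rw [← Real.rpow_add hx0R, he1, Real.rpow_one]
  have hpos : (0 : ℝ) < (x : ℝ) ^ ((1 : ℝ) - 2 * ε) := Real.rpow_pos_of_pos hx0R _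
  have hkey : (x : ℝ) ^ ((1 : ℝ) - 2 * ε) * 4 < (x : ℝ) :=
    calc (x : ℝ) ^ ((1 : ℝ) - 2 * ε) * 4
        < (x : ℝ) ^ ((1 : ℝ) - 2 * ε) * (x : ℝ) ^ (2 * ε) :=
          mul_lt_mul_of_pos_left h4 hpos
      _ = (x : ℝ) := hsplit
  have h1R : (b : ℝ) ≤ (t : ℝ) ^ 2 + (|D| : ℝ) := by exact_mod_cast h1
  have hfinal : (x : ℝ) < 4 * (|D| : ℝ) := by
    have hDpos : (0 : ℝ) < (|D| : ℝ) := by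
      have : (0 : ℤ) < |D| := by omega
      exact_mod_cast this
    have ht2 : (t : ℝ) ^ 2 ≤ (x : ℝ) ^ ((1 : ℝ) - 2 * ε) := hpow ▸ hsq
    linarith [hlt, h1R, ht2, hkey, hDpos]
  exact_mod_cast hfinal
end

section
/- Let D > 1 be squarefree and 0 < b < a integers with a ∣ b² − D. Define Q(x,y) = 2(xa + yb)² + 2y²D. If (α, β) ∈ ℤ² \ {(0,0)} minimizes Q over nonzero integer pairs, then (up to sign, i.e., possibly replacing (α,β) by (−α,−β)) one of the following holds: (α,β) = (1,0); or (α,β) = (0,1); or 0 < α ≤ b, α ≤ |β| ≤ a, and β < 0. -/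
lemma minimizer_key (D a b α β : ℤ) (hD1 : 1 < D) (hb : 0 < b) (hba : b < a)
    (hα : 0 < α) (hβ : β ≠ 0)
    (h1 : 2 * (α * a + β * b) ^ 2 + 2 * β ^ 2 * D ≤ 2 * a ^ 2) :
    0 < α ∧ α ≤ b ∧ α ≤ |β| ∧ |β| ≤ a ∧ β < 0 := by
  have ha0 : 0 < a := hb.trans hba
  have hb2 : (1:ℤ) ≤ β ^ 2 := by rcases lt_or_gt_of_ne hβ with h | h <;> nlinarith
  have hsq : (α * a + β * b) ^ 2 < a ^ 2 := by nlinarith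
  have hβ2a : β ^ 2 < a ^ 2 := by nlinarith [sq_nonneg (α * a + β * b)]
  have hβa : |β| ≤ a := by
    by_contra h
    push_neg at h
    have h2 := abs_nonneg β
    nlinarith [sq_abs β]
  have hupper : α * a + β * b < a := by nlinarith
  have hlower : -a < α * a + β * b := by nlinarith
  have hβneg : β < 0 := by
    by_contra h
    push_neg at h
    have h1β : 1 ≤ β := by omega
    have h1α : 1 ≤ α := hα
    nlinarith
  have h4 : -a ≤ β := (abs_le.mp hβa).1
  have hαb : α ≤ b := by
    by_contra h
    push_neg at h
    have : b + 1 ≤ α := by omega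
    nlinarith
  have hαm : α ≤ |β| := by
    rw [abs_of_neg hβneg]
    by_contra h
    push_neg at h
    have : -β + 1 ≤ α := by omega
    nlinarith
  exact ⟨hα, hαb, hαm, hβa, hβneg⟩

/-- Classification of the minimizer of the norm form `Q(x,y) = 2(xa+yb)² + 2y²D`
over nonzero integer pairs: up to sign it is `(1,0)`, `(0,1)`, or satisfies
`0 < α ≤ b`, `α ≤ |β| ≤ a`, `β < 0`. -/
theorem minimizer_classification (D : ℤ) (hD1 : 1 < D) (hsf : Squarefree D)
    (a b : ℤ) (hb : 0 < b) (hba : b < a) (hdvd : a ∣ b ^ 2 - D)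
    (α β : ℤ) (hne : (α, β) ≠ (0, 0))
    (hmin : ∀ x y : ℤ, (x, y) ≠ (0, 0) →
      2 * (α * a + β * b) ^ 2 + 2 * β ^ 2 * D ≤ 2 * (x * a + y * b) ^ 2 + 2 * y ^ 2 * D) :
    ∃ α' β' : ℤ, ((α', β') = (α, β) ∨ (α', β') = (-α, -β)) ∧
      ((α', β') = (1, 0) ∨ (α', β') = (0, 1) ∨
        (0 < α' ∧ α' ≤ b ∧ α' ≤ |β'| ∧ |β'| ≤ a ∧ β' < 0)) := by
  have ha0 : 0 < a := hb.trans hba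
  have h10 := hmin 1 0 (by simp)
  by_cases hβ : β = 0
  · subst hβ
    have hα0 : α ≠ 0 := by
      intro h; exact hne (by simp [h])
    have hα2 : α ^ 2 ≤ 1 := by nlinarith
    have hαle : α ≤ 1 := by nlinarith
    have hαge : -1 ≤ α := by nlinarith
    have : α = 1 ∨ α = -1 := by omega
    rcases this with h | h
    · exact ⟨1, 0, Or.inl (by simp [h]), Or.inl rfl⟩
    · exact ⟨1, 0, Or.inr (by simp [h]), Or.inl rfl⟩
  · by_cases hα : α = 0
    · subst hα
      have h01 := hmin 0 1 (by simp)
      have hβ2 : β ^ 2 ≤ 1 := by nlinarith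
      have hβle : β ≤ 1 := by nlinarith
      have hβge : -1 ≤ β := by nlinarith
      have : β = 1 ∨ β = -1 := by omega
      rcases this with h | h
      · exact ⟨0, 1, Or.inl (by simp [h]), Or.inr (Or.inl rfl)⟩
      · exact ⟨0, 1, Or.inr (by simp [h]), Or.inr (Or.inl rfl)⟩
    · have h1 : 2 * (α * a + β * b) ^ 2 + 2 * β ^ 2 * D ≤ 2 * a ^ 2 := by nlinarith
      rcases lt_or_gt_of_ne hα with h | h
      · have h1' : 2 * ((-α) * a + (-β) * b) ^ 2 + 2 * (-β) ^ 2 * D ≤ 2 * a ^ 2 := by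
          nlinarith [h1]
        have := minimizer_key D a b (-α) (-β) hD1 hb hba (by omega) (by omega) h1'
        exact ⟨-α, -β, Or.inr rfl, Or.inr (Or.inr this)⟩
      · have := minimizer_key D a b α β hD1 hb hba h hβ h1
        exact ⟨α, β, Or.inl rfl, Or.inr (Or.inr this)⟩
end

section
/- Let D > 1 be squarefree. For every integer b > √((D + D√D)/(√D − 1)), the pair (a,b) = (b² − D, b) satisfies 0 < b < a and a ∣ b² − D, and the corresponding lattice Λ(a,b) is unstable. In particular there are infinitely many pairs (a,b) giving unstable lattices Λ(a,b). -/
/-- `λ₁(Λ(a,b))²`: the infimum of the norm form `Q(x,y) = 2(xa+yb)² + 2y²D`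
over nonzero integer pairs. -/
noncomputable def lam1sq (D a b : ℤ) : ℝ :=
  sInf {r : ℝ | ∃ x y : ℤ, (x, y) ≠ (0, 0) ∧
    r = 2 * ((x : ℝ) * a + (y : ℝ) * b) ^ 2 + 2 * (y : ℝ) ^ 2 * D}

lemma lam1sq_aux (D : ℤ) (hD1 : 1 < D) (b : ℤ)
    (hb : Real.sqrt ((D + D * Real.sqrt D) / (Real.sqrt D - 1)) < (b : ℝ)) :
    0 < b ∧ b < b ^ 2 - D ∧
      lam1sq D (b ^ 2 - D) b < 2 * ((b : ℝ) ^ 2 - D) * Real.sqrt D := by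
  have hD0 : (0 : ℝ) < (D : ℝ) := by exact_mod_cast (by omega : (0:ℤ) < D)
  set t := Real.sqrt D with ht
  have ht2 : t ^ 2 = (D : ℝ) := Real.sq_sqrt hD0.le
  have ht1 : 1 < t := by
    rw [ht, show (1:ℝ) = Real.sqrt 1 by simp]
    exact Real.sqrt_lt_sqrt (by norm_num) (by exact_mod_cast hD1)
  have hb0 : (0 : ℝ) < (b : ℝ) := lt_of_le_of_lt (Real.sqrt_nonneg _) hb
  have hbZ0 : 0 < b := by exact_mod_cast hb0
  have hb2 : ((D : ℝ) + D * t) / (t - 1) < (b : ℝ) ^ 2 := by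
    have := (Real.sqrt_lt' hb0).mp hb
    linarith
  have hb3 : (D : ℝ) + D * t < (b : ℝ) ^ 2 * (t - 1) :=
    (div_lt_iff₀ (by linarith)).mp hb2
  have key : (b : ℝ) ^ 2 + D < ((b : ℝ) ^ 2 - D) * t := by nlinarith
  have hlt : (b : ℝ) < (b : ℝ) ^ 2 - D := by
    nlinarith [sq_nonneg ((b : ℝ) - t)]
  have hltZ : b < b ^ 2 - D := by exact_mod_cast (by push_cast; exact hlt :
    ((b : ℤ) : ℝ) < ((b ^ 2 - D : ℤ) : ℝ))
  refine ⟨hbZ0, hltZ, ?_⟩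
  -- the set
  have hmem : (2 * ((b : ℝ)) ^ 2 + 2 * D) ∈ {r : ℝ | ∃ x y : ℤ, (x, y) ≠ (0, 0) ∧
      r = 2 * ((x : ℝ) * (b ^ 2 - D : ℤ) + (y : ℝ) * b) ^ 2 + 2 * (y : ℝ) ^ 2 * D} := by
    exact ⟨0, 1, by norm_num, by push_cast; ring⟩
  have hbdd : BddBelow {r : ℝ | ∃ x y : ℤ, (x, y) ≠ (0, 0) ∧
      r = 2 * ((x : ℝ) * (b ^ 2 - D : ℤ) + (y : ℝ) * b) ^ 2 + 2 * (y : ℝ) ^ 2 * D} := by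
    refine ⟨0, ?_⟩
    rintro r ⟨x, y, -, rfl⟩
    have h1 : (0:ℝ) ≤ 2 * ((x : ℝ) * (b ^ 2 - D : ℤ) + (y : ℝ) * b) ^ 2 := by positivity
    have h2 : (0:ℝ) ≤ 2 * (y : ℝ) ^ 2 * D := by positivity
    linarith
  have hle : lam1sq D (b ^ 2 - D) b ≤ 2 * ((b : ℝ)) ^ 2 + 2 * D :=
    csInf_le hbdd hmem
  have : 2 * ((b : ℝ)) ^ 2 + 2 * D < 2 * ((b : ℝ) ^ 2 - D) * t := by linarith
  linarith

/-- Taking `a = b² − D` for every integer `b > √((D + D√D)/(√D − 1))` yields a pair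
`(a,b)` with `0 < b < a`, `a ∣ b² − D`, whose lattice `Λ(a,b)` is unstable
(`λ₁² < det(Λ(a,b)) = 2a√D`); in particular there are infinitely many such pairs. -/
theorem infinitely_many_unstable (D : ℤ) (hD1 : 1 < D) (hsf : Squarefree D) :
    (∀ b : ℤ, Real.sqrt ((D + D * Real.sqrt D) / (Real.sqrt D - 1)) < (b : ℝ) →
      (0 < b ∧ b < b ^ 2 - D ∧ (b ^ 2 - D) ∣ b ^ 2 - D ∧
        lam1sq D (b ^ 2 - D) b < 2 * ((b : ℝ) ^ 2 - D) * Real.sqrt D)) ∧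
    {p : ℤ × ℤ | 0 < p.2 ∧ p.2 < p.1 ∧ p.1 ∣ p.2 ^ 2 - D ∧
      lam1sq D p.1 p.2 < 2 * (p.1 : ℝ) * Real.sqrt D}.Infinite := by
  constructor
  · intro b hb
    obtain ⟨h1, h2, h3⟩ := lam1sq_aux D hD1 b hb
    exact ⟨h1, h2, dvd_refl _, h3⟩
  · set B : ℝ := Real.sqrt ((D + D * Real.sqrt D) / (Real.sqrt D - 1)) with hB
    set b₀ : ℤ := ⌈B⌉ + 1 with hb₀
    apply Set.infinite_of_injective_forall_mem
      (f := fun n : ℕ => (((b₀ + n) ^ 2 - D, b₀ + n) : ℤ × ℤ))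
    · intro n m h
      simp only [Prod.mk.injEq] at h
      omega
    · intro n
      have hbn : B < ((b₀ + (n : ℤ) : ℤ) : ℝ) := by
        have h1 := Int.le_ceil B
        have h2 : ((b₀ : ℤ) : ℝ) = (⌈B⌉ : ℝ) + 1 := by rw [hb₀]; push_cast; ring
        push_cast [h2] at *
        push_cast
        have : (0:ℝ) ≤ (n : ℝ) := Nat.cast_nonneg n
        linarith
      obtain ⟨h1, h2, h3⟩ := lam1sq_aux D hD1 (b₀ + n) hbn
      refine ⟨h1, h2, dvd_refl _, ?_⟩
      have : (((b₀ + (n:ℤ)) ^ 2 - D : ℤ) : ℝ) = ((b₀ + (n:ℤ) : ℤ) : ℝ) ^ 2 - D := by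
        push_cast; ring
      simpa [this] using h3
end
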